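/- Let V ∈ C²(ℝ^d) be non-negative, confining, strictly sub-quartic, with associated modulus ε(λ) → 0 from the flow-approximation lemma. Let b ∈ L^∞(ℝ^d) be non-negative. Suppose b satisfies the Uniform Geometric Control Condition with constants T, c > 0: (1/(2T))∫_{-T}^{T}(b ∗ κ_{r})(x_0 + tν_0)dt ≥ c for all (x_0,ν_0) ∈ ℝ^d × S^{d-1} and all r > 0. Then for T̃ = 2T and any fixed R̃ ≥ 1: for every λ large and every (x,ξ) on {p = λ²} with |ξ| ≥ λ/2, one has (1/(2T̃))∫_{-T̃}^{T̃} (b ∗ κ_{R̃/√λ})((π∘φ_{t/λ})(x,ξ)) dt ≥ (T/(√2 T̃)) c + o(1) as λ → +∞, uniformly on this region. -/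

import Mathlib

open MeasureTheory Metric Filter Set
open scoped RealInnerProductSpace

/-- The normalized indicator of the ball of radius `r`. -/
noncomputable def kappa (d : ℕ) (r : ℝ) (x : EuclideanSpace ℝ (Fin d)) : ℝ :=
  if ‖x‖ < r then ((volume (ball (0 : EuclideanSpace ℝ (Fin d)) 1)).toReal * r ^ d)⁻¹ else 0

/-- Convolution `b ∗ κ_r`. -/
noncomputable def convK {d : ℕ} (b : EuclideanSpace ℝ (Fin d) → ℝ) (r : ℝ)
    (x : EuclideanSpace ℝ (Fin d)) : ℝ :=
  ∫ y, b y * kappa d r (x - y)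

lemma kappa_nonneg (d : ℕ) (r : ℝ) (x : EuclideanSpace ℝ (Fin d)) : 0 ≤ kappa d r x := by
  unfold kappa; split
  · rename_i h
    have hr : 0 < r := lt_of_le_of_lt (norm_nonneg x) h
    positivity
  · exact le_rfl

lemma kappa_le (d : ℕ) {r : ℝ} (hr : 0 ≤ r) (x : EuclideanSpace ℝ (Fin d)) :
    kappa d r x ≤ ((volume (ball (0 : EuclideanSpace ℝ (Fin d)) 1)).toReal * r ^ d)⁻¹ := by
  unfold kappa; split
  · exact le_rfl
  · exact inv_nonneg.2 (mul_nonneg ENNReal.toReal_nonneg (pow_nonneg hr d))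

lemma kappa_meas (d : ℕ) (r : ℝ) : Measurable (kappa d r) := by
  unfold kappa
  exact Measurable.ite (isOpen_lt continuous_norm continuous_const).measurableSet
    measurable_const measurable_const

lemma kappa_zero_of_not_lt {d : ℕ} {r : ℝ} {x : EuclideanSpace ℝ (Fin d)}
    (h : ¬ ‖x‖ < r) : kappa d r x = 0 := by
  unfold kappa; rw [if_neg h]

section aux

variable {d : ℕ} {b : EuclideanSpace ℝ (Fin d) → ℝ}

lemma bk_aesm (hbmeas : Measurable b) (r : ℝ) (z : EuclideanSpace ℝ (Fin d)) :
    AEStronglyMeasurable (fun y => b y * kappa d r (z - y)) volume :=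
  (hbmeas.mul ((kappa_meas d r).comp (measurable_const.sub measurable_id))).aestronglyMeasurable

lemma bk_bound (hbd : MemLp b ⊤ volume) :
    ∀ᵐ y : EuclideanSpace ℝ (Fin d), ‖b y‖ ≤ (eLpNormEssSup b volume).toReal := by
  have htop : eLpNormEssSup b volume < ⊤ := by
    have h2 := hbd.2
    rwa [eLpNorm_exponent_top] at h2
  filter_upwards [ae_le_eLpNormEssSup (f := b) (μ := volume)] with y hy
  calc ‖b y‖ = ((‖b y‖₊ : ENNReal)).toReal := by simp
  _ ≤ _ := ENNReal.toReal_mono htop.ne hy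

lemma integrable_bk (hbmeas : Measurable b) (hbd : MemLp b ⊤ volume)
    {r : ℝ} (hr : 0 ≤ r) (z : EuclideanSpace ℝ (Fin d)) :
    Integrable (fun y => b y * kappa d r (z - y)) volume := by
  set C := (eLpNormEssSup b volume).toReal with hC
  set K := ((volume (ball (0 : EuclideanSpace ℝ (Fin d)) 1)).toReal * r ^ d)⁻¹ with hK
  have hKnn : 0 ≤ K := inv_nonneg.2 (mul_nonneg ENNReal.toReal_nonneg (pow_nonneg hr d))
  have hCnn : 0 ≤ C := ENNReal.toReal_nonneg
  apply Integrable.mono' (g := (ball z r).indicator fun _ => C * K)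
  · exact (integrable_indicator_iff measurableSet_ball).2
      (integrableOn_const measure_ball_lt_top.ne enorm_ne_top)
  · exact bk_aesm hbmeas r z
  · filter_upwards [bk_bound hbd] with y hy
    by_cases h : y ∈ ball z r
    · rw [indicator_of_mem h]
      calc ‖b y * kappa d r (z - y)‖ = ‖b y‖ * kappa d r (z - y) := by
            rw [norm_mul, Real.norm_of_nonneg (kappa_nonneg d r _)]
      _ ≤ C * K := mul_le_mul hy (kappa_le d hr _) (kappa_nonneg d r _) hCnn
    · rw [indicator_of_notMem h]
      have hn : ¬ ‖z - y‖ < r := by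
        rw [norm_sub_rev]; simpa [mem_ball, dist_eq_norm] using h
      simp [kappa_zero_of_not_lt hn]

lemma convK_nonneg (hbnn : ∀ x, 0 ≤ b x) (r : ℝ) (z : EuclideanSpace ℝ (Fin d)) :
    0 ≤ convK b r z :=
  integral_nonneg fun y => mul_nonneg (hbnn y) (kappa_nonneg d r _)

lemma kappa_pointwise {r r' : ℝ} (hr' : 0 < r') (hrr : r' ≤ r)
    {w w' : EuclideanSpace ℝ (Fin d)} (hww : ‖w - w'‖ ≤ r - r') :
    (r' / r) ^ d * kappa d r' w' ≤ kappa d r w := by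
  have hr : 0 < r := hr'.trans_le hrr
  unfold kappa
  by_cases h : ‖w'‖ < r'
  · have hw : ‖w‖ < r := by
      calc ‖w‖ = ‖w - w' + w'‖ := by rw [sub_add_cancel]
      _ ≤ ‖w - w'‖ + ‖w'‖ := norm_add_le _ _
      _ < (r - r') + r' := by linarith
      _ = r := by ring
    rw [if_pos h, if_pos hw]
    set ω := (volume (ball (0 : EuclideanSpace ℝ (Fin d)) 1)).toReal with hω
    have hωnn : (0:ℝ) ≤ ω := ENNReal.toReal_nonneg
    rcases eq_or_lt_of_le hωnn with h0 | h0
    · simp [← h0]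
    · have heq : (r' / r) ^ d * (ω * r' ^ d)⁻¹ = (ω * r ^ d)⁻¹ := by
        rw [div_pow, mul_inv, mul_inv, div_eq_mul_inv]
        field_simp
      rw [heq]
  · rw [if_neg h, mul_zero]
    split
    · rename_i hw
      exact inv_nonneg.2 (mul_nonneg ENNReal.toReal_nonneg
        (pow_nonneg ((norm_nonneg _).trans hw.le) d))
    · exact le_rfl

lemma convK_mono_center (hbmeas : Measurable b) (hbnn : ∀ x, 0 ≤ b x)
    (hbd : MemLp b ⊤ volume) {r r' : ℝ} (hr' : 0 < r') (hrr : r' ≤ r)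
    {P ℓ : EuclideanSpace ℝ (Fin d)} (h : ‖P - ℓ‖ ≤ r - r') :
    (r' / r) ^ d * convK b r' ℓ ≤ convK b r P := by
  unfold convK
  rw [← integral_const_mul]
  apply integral_mono_of_nonneg
  · exact Eventually.of_forall fun y => mul_nonneg
      (pow_nonneg (div_nonneg hr'.le (hr'.le.trans hrr)) d)
      (mul_nonneg (hbnn y) (kappa_nonneg d r' _))
  · exact integrable_bk hbmeas hbd (hr'.le.trans hrr) P
  · apply Eventually.of_forall
    intro y
    show (r' / r) ^ d * (b y * kappa d r' (ℓ - y)) ≤ b y * kappa d r (P - y)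
    rw [mul_left_comm]
    apply mul_le_mul_of_nonneg_left _ (hbnn y)
    apply kappa_pointwise hr' hrr
    simpa [sub_sub_sub_cancel_right] using h

lemma convK_continuous (hbmeas : Measurable b) (hbd : MemLp b ⊤ volume)
    {r : ℝ} (hr : 0 < r) : Continuous (convK b r) := by
  rw [continuous_iff_continuousAt]
  intro z₀
  set C := (eLpNormEssSup b volume).toReal with hC
  set K := ((volume (ball (0 : EuclideanSpace ℝ (Fin d)) 1)).toReal * r ^ d)⁻¹ with hK
  have hKnn : 0 ≤ K := inv_nonneg.2 (mul_nonneg ENNReal.toReal_nonneg (pow_nonneg hr.le d))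
  have hCnn : 0 ≤ C := ENNReal.toReal_nonneg
  unfold ContinuousAt convK
  apply tendsto_integral_filter_of_dominated_convergence
    ((ball z₀ (r + 1)).indicator fun _ => C * K)
  · exact Eventually.of_forall fun z => bk_aesm hbmeas r z
  · filter_upwards [ball_mem_nhds z₀ one_pos] with z hz
    filter_upwards [bk_bound hbd] with y hy
    by_cases h : ‖z - y‖ < r
    · have hmem : y ∈ ball z₀ (r + 1) := by
        rw [mem_ball]
        calc dist y z₀ ≤ dist y z + dist z z₀ := dist_triangle _ _ _
        _ < r + 1 := by
            have h1 : dist y z < r := by rw [dist_eq_norm, ← norm_sub_rev]; exact h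
            have h2 : dist z z₀ < 1 := hz
            linarith
      rw [indicator_of_mem hmem]
      calc ‖b y * kappa d r (z - y)‖ = ‖b y‖ * kappa d r (z - y) := by
            rw [norm_mul, Real.norm_of_nonneg (kappa_nonneg d r _)]
      _ ≤ C * K := mul_le_mul hy (kappa_le d hr.le _) (kappa_nonneg d r _) hCnn
    · rw [kappa_zero_of_not_lt h, mul_zero, norm_zero]
      exact indicator_nonneg (fun _ _ => mul_nonneg hCnn hKnn) y
  · exact (integrable_indicator_iff measurableSet_ball).2
      (integrableOn_const measure_ball_lt_top.ne enorm_ne_top)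
  · have hsph : volume (sphere z₀ r) = 0 :=
      Measure.addHaar_sphere_of_ne_zero volume z₀ hr.ne'
    filter_upwards [measure_eq_zero_iff_ae_notMem.mp hsph] with y hy
    have hne : ‖z₀ - y‖ ≠ r := by
      intro hc
      exact hy (show dist y z₀ = r by rw [dist_eq_norm, ← norm_sub_rev]; exact hc)
    have hev : ∀ᶠ z in nhds z₀, b y * kappa d r (z - y) = b y * kappa d r (z₀ - y) := by
      rcases lt_or_gt_of_ne hne with hlt | hgt
      · have hU : IsOpen {z : EuclideanSpace ℝ (Fin d) | ‖z - y‖ < r} :=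
          isOpen_lt ((continuous_id.sub continuous_const).norm) continuous_const
        filter_upwards [hU.mem_nhds hlt] with z hz
        unfold kappa
        rw [if_pos hz, if_pos hlt]
      · have hU : IsOpen {z : EuclideanSpace ℝ (Fin d) | r < ‖z - y‖} :=
          isOpen_lt continuous_const ((continuous_id.sub continuous_const).norm)
        filter_upwards [hU.mem_nhds hgt] with z hz
        rw [kappa_zero_of_not_lt (lt_asymm hz), kappa_zero_of_not_lt (lt_asymm hgt)]
    exact Tendsto.congr' (hev.mono fun z h => h.symm) tendsto_const_nhds

end aux

set_option maxHeartbeats 1000000 in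
theorem stmt16 {d : ℕ} (V : EuclideanSpace ℝ (Fin d) → ℝ)
    (hV2 : ContDiff ℝ 2 V) (hVnn : ∀ x, 0 ≤ V x)
    (hVconf : Tendsto V (cocompact _) atTop)
    (hVsub : Tendsto (fun x => ‖gradient V x‖ / (V x) ^ ((3 : ℝ) / 4))
      (cocompact _) (nhds 0))
    (ε : ℝ → ℝ) (hεnn : ∀ lam, 0 ≤ ε lam) (hεlim : Tendsto ε atTop (nhds 0))
    (hεgrad : ∀ lam : ℝ, 1 ≤ lam → ∀ z, V z ≤ lam ^ 2 →
      ‖gradient V z‖ ≤ lam ^ ((3 : ℝ) / 2) * ε lam)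
    -- the Hamiltonian flow of `p(x,ξ) = V(x) + |ξ|²/2`
    (Φ : ℝ → EuclideanSpace ℝ (Fin d) × EuclideanSpace ℝ (Fin d) →
      EuclideanSpace ℝ (Fin d) × EuclideanSpace ℝ (Fin d))
    (hΦ0 : ∀ ρ, Φ 0 ρ = ρ)
    (hΦ : ∀ ρ, ∀ t : ℝ, HasDerivAt (fun s => Φ s ρ)
      ((Φ t ρ).2, -gradient V (Φ t ρ).1) t)
    (b : EuclideanSpace ℝ (Fin d) → ℝ)
    (hbmeas : Measurable b) (hbnn : ∀ x, 0 ≤ b x) (hbd : MemLp b ⊤ volume)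
    (T c : ℝ) (hT : 0 < T) (hc : 0 < c)
    (hGCC : ∀ x0 ν0 : EuclideanSpace ℝ (Fin d), ‖ν0‖ = 1 → ∀ r : ℝ, 0 < r →
      c ≤ (2 * T)⁻¹ * ∫ t in (-T)..T, convK b r (x0 + t • ν0))
    (Rt : ℝ) (hRt : 1 ≤ Rt) :
    ∃ δ : ℝ → ℝ, Tendsto δ atTop (nhds 0) ∧
      ∀ lam : ℝ, 1 ≤ lam → ∀ x ξ : EuclideanSpace ℝ (Fin d),
        V x + ‖ξ‖ ^ 2 / 2 = lam ^ 2 → lam / 2 ≤ ‖ξ‖ →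
        T / (Real.sqrt 2 * (2 * T)) * c + δ lam ≤
          (2 * (2 * T))⁻¹ * ∫ t in (-(2 * T))..(2 * T),
            convK b (Rt / Real.sqrt lam) ((Φ (t / lam) (x, ξ)).1) := by
  set A := T / (Real.sqrt 2 * (2 * T)) * c with hA
  have hs2 : (0:ℝ) < Real.sqrt 2 := Real.sqrt_pos.2 (by norm_num)
  have hApos : 0 < A := by
    apply mul_pos _ hc
    apply div_pos hT (by positivity)
  refine ⟨fun lam => if 4 * T ^ 2 * ε lam ≤ Rt / 2 then
      A * ((1 - 4 * T ^ 2 * ε lam / Rt) ^ d - 1) else -A, ?_, ?_⟩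
  · -- Tendsto δ → 0
    have hev : ∀ᶠ lam in atTop, 4 * T ^ 2 * ε lam ≤ Rt / 2 := by
      have h0 : (0:ℝ) < Rt / 2 / (4 * T ^ 2) := by positivity
      filter_upwards [hεlim.eventually_lt_const h0] with lam hlam
      have h4 : (0:ℝ) < 4 * T ^ 2 := by positivity
      calc 4 * T ^ 2 * ε lam ≤ 4 * T ^ 2 * (Rt / 2 / (4 * T ^ 2)) := by
            exact mul_le_mul_of_nonneg_left hlam.le h4.le
      _ = Rt / 2 := by field_simp
    have hcont : Continuous fun u : ℝ => A * ((1 - 4 * T ^ 2 * u / Rt) ^ d - 1) := by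
      fun_prop
    have h1 : Tendsto (fun lam => A * ((1 - 4 * T ^ 2 * ε lam / Rt) ^ d - 1))
        atTop (nhds 0) := by
      have := (hcont.tendsto 0).comp hεlim
      simpa [Function.comp_def] using this
    apply h1.congr' (hev.mono fun lam h => (if_pos h).symm)
  · intro lam hlam x ξ henergy hxi
    beta_reduce
    have hlam0 : (0:ℝ) < lam := lt_of_lt_of_le one_pos hlam
    have hsl : (1:ℝ) ≤ Real.sqrt lam := by
      rw [show (1:ℝ) = Real.sqrt 1 by simp]
      exact Real.sqrt_le_sqrt hlam
    have hsl0 : (0:ℝ) < Real.sqrt lam := lt_of_lt_of_le one_pos hsl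
    set r : ℝ := Rt / Real.sqrt lam with hr
    have hrpos : 0 < r := by positivity
    set ρ : EuclideanSpace ℝ (Fin d) × EuclideanSpace ℝ (Fin d) := (x, ξ) with hρ
    set X : ℝ → EuclideanSpace ℝ (Fin d) := fun s => (Φ s ρ).1 with hX
    set Ξ : ℝ → EuclideanSpace ℝ (Fin d) := fun s => (Φ s ρ).2 with hΞ
    have hXd : ∀ s, HasDerivAt X (Ξ s) s := by
      intro s
      have := (ContinuousLinearMap.fst ℝ (EuclideanSpace ℝ (Fin d)) (EuclideanSpace ℝ (Fin d))).hasFDerivAt.comp_hasDerivAt s (hΦ ρ s)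
      simpa [Function.comp_def] using this
    have hΞd : ∀ s, HasDerivAt Ξ (-gradient V (X s)) s := by
      intro s
      have := (ContinuousLinearMap.snd ℝ (EuclideanSpace ℝ (Fin d)) (EuclideanSpace ℝ (Fin d))).hasFDerivAt.comp_hasDerivAt s (hΦ ρ s)
      simpa [Function.comp_def] using this
    have hVdiff : Differentiable ℝ V := hV2.differentiable two_ne_zero
    -- energy conservation
    have hEcons : ∀ s, V (X s) + ⟪Ξ s, Ξ s⟫ / 2 = lam ^ 2 := by
      have hEd : ∀ s, HasDerivAt (fun u => V (X u) + ⟪Ξ u, Ξ u⟫ / 2) 0 s := by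
        intro s
        have hg : HasGradientAt V (gradient V (X s)) (X s) :=
          (hVdiff (X s)).hasGradientAt
        have h1 : HasDerivAt (fun u => V (X u)) ⟪gradient V (X s), Ξ s⟫ s := by
          have := hg.hasFDerivAt.comp_hasDerivAt s (hXd s)
          simpa [InnerProductSpace.toDual_apply_apply, Function.comp_def] using this
        have h2 : HasDerivAt (fun u => ⟪Ξ u, Ξ u⟫)
            (⟪Ξ s, -gradient V (X s)⟫ + ⟪-gradient V (X s), Ξ s⟫) s :=
          HasDerivAt.inner ℝ (hΞd s) (hΞd s)
        have h3 := h1.add (h2.div_const 2)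
        have heq : ⟪gradient V (X s), Ξ s⟫ +
            (⟪Ξ s, -gradient V (X s)⟫ + ⟪-gradient V (X s), Ξ s⟫) / 2 = 0 := by
          rw [inner_neg_right, inner_neg_left, real_inner_comm (Ξ s)]
          ring
        rwa [heq] at h3
      intro s
      have hX0 : X 0 = x := by simp [hX, hΦ0, hρ]
      have hΞ0 : Ξ 0 = ξ := by simp [hΞ, hΦ0, hρ]
      have hconst : V (X s) + ⟪Ξ s, Ξ s⟫ / 2 = V (X 0) + ⟪Ξ 0, Ξ 0⟫ / 2 :=
        is_const_of_deriv_eq_zero (fun u => (hEd u).differentiableAt)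
          (fun u => (hEd u).deriv) s 0
      rw [hconst, hX0, hΞ0, real_inner_self_eq_norm_sq]
      exact henergy
    have hVX : ∀ s, V (X s) ≤ lam ^ 2 := by
      intro s
      have h := hEcons s
      have h2 : (0:ℝ) ≤ ⟪Ξ s, Ξ s⟫ := real_inner_self_nonneg
      linarith
    set M : ℝ := lam ^ ((3:ℝ)/2) * ε lam with hM
    have hMnn : 0 ≤ M := mul_nonneg (Real.rpow_nonneg hlam0.le _) (hεnn lam)
    have hgradbd : ∀ s, ‖gradient V (X s)‖ ≤ M := fun s =>
      hεgrad lam hlam (X s) (hVX s)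
    -- velocity bound
    have hΞbd : ∀ u : ℝ, ‖Ξ u - ξ‖ ≤ M * |u| := by
      intro u
      have hΞ0 : Ξ 0 = ξ := by simp [hΞ, hΦ0, hρ]
      have := Convex.norm_image_sub_le_of_norm_hasDerivWithin_le
        (f := Ξ) (f' := fun v => -gradient V (X v)) (s := Set.univ) (C := M)
        (fun v _ => (hΞd v).hasDerivWithinAt)
        (fun v _ => by rw [norm_neg]; exact hgradbd v)
        convex_univ (mem_univ 0) (mem_univ u)
      simpa [hΞ0, Real.norm_eq_abs] using this
    -- position bound
    have hXbd : ∀ s : ℝ, ‖X s - (x + s • ξ)‖ ≤ M * |s| * |s| := by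
      intro s
      have hX0 : X 0 = x := by simp [hX, hΦ0, hρ]
      have hg : ∀ u : ℝ, HasDerivAt (fun v => X v - v • ξ) (Ξ u - ξ) u := by
        intro u
        have h1 := (hXd u).sub ((hasDerivAt_id u).smul_const ξ)
        simpa [Pi.sub_def] using h1
      have := Convex.norm_image_sub_le_of_norm_hasDerivWithin_le
        (f := fun v => X v - v • ξ) (f' := fun u => Ξ u - ξ)
        (s := Set.Icc (-|s|) |s|) (C := M * |s|)
        (fun u _ => (hg u).hasDerivWithinAt)
        (fun u hu => by
          calc ‖Ξ u - ξ‖ ≤ M * |u| := hΞbd u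
          _ ≤ M * |s| := by
              apply mul_le_mul_of_nonneg_left _ hMnn
              exact abs_le.2 ⟨hu.1, hu.2⟩)
        (convex_Icc _ _)
        (mem_Icc.2 ⟨neg_nonpos.2 (abs_nonneg s), abs_nonneg s⟩)
        (mem_Icc.2 ⟨neg_abs_le s, le_abs_self s⟩)
      have heq : X s - s • ξ - (X 0 - (0:ℝ) • ξ) = X s - (x + s • ξ) := by
        rw [hX0, zero_smul, sub_zero]
        abel
      rw [heq] at this
      calc ‖X s - (x + s • ξ)‖ ≤ M * |s| * ‖s - 0‖ := this
      _ = M * |s| * |s| := by rw [sub_zero, Real.norm_eq_abs]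
    -- the error bound on [-2T, 2T]
    have herr : ∀ t : ℝ, |t| ≤ 2 * T →
        ‖X (t / lam) - (x + (t / lam) • ξ)‖ ≤ 4 * T ^ 2 * ε lam / Real.sqrt lam := by
      intro t ht
      have h1 := hXbd (t / lam)
      have h2 : M * |t / lam| * |t / lam| = lam ^ ((3:ℝ)/2) / lam ^ 2 * (ε lam * t ^ 2) := by
        rw [mul_assoc, abs_mul_abs_self, hM]
        field_simp [hlam0.ne']
      have h3 : lam ^ ((3:ℝ)/2) / lam ^ 2 = (Real.sqrt lam)⁻¹ := by
        rw [Real.sqrt_eq_rpow, ← Real.rpow_neg hlam0.le, ← Real.rpow_natCast lam 2,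
          ← Real.rpow_sub hlam0]
        congr 1
        norm_num
      calc ‖X (t / lam) - (x + (t / lam) • ξ)‖ ≤ M * |t / lam| * |t / lam| := h1
      _ = (Real.sqrt lam)⁻¹ * (ε lam * t ^ 2) := by rw [h2, h3]
      _ ≤ (Real.sqrt lam)⁻¹ * (ε lam * (2 * T) ^ 2) := by
          apply mul_le_mul_of_nonneg_left _ (by positivity)
          apply mul_le_mul_of_nonneg_left _ (hεnn lam)
          calc t ^ 2 = |t| ^ 2 := (sq_abs t).symm
          _ ≤ (2 * T) ^ 2 := by
              apply pow_le_pow_left₀ (abs_nonneg t) ht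
      _ = 4 * T ^ 2 * ε lam / Real.sqrt lam := by
          field_simp
          ring
    -- nonnegativity of the RHS
    have hRHSnn : 0 ≤ (2 * (2 * T))⁻¹ * ∫ t in (-(2 * T))..(2 * T),
        convK b r ((Φ (t / lam) (x, ξ)).1) := by
      apply mul_nonneg (by positivity)
      apply intervalIntegral.integral_nonneg (by linarith)
      intro t _
      exact convK_nonneg hbnn r _
    by_cases hgood : 4 * T ^ 2 * ε lam ≤ Rt / 2
    case neg =>
      rw [if_neg hgood]
      simpa using hRHSnn
    rw [if_pos hgood]
    -- the good case
    set β : ℝ := 1 - 4 * T ^ 2 * ε lam / Rt with hβ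
    have hRt0 : (0:ℝ) < Rt := lt_of_lt_of_le one_pos hRt
    have hu12 : 4 * T ^ 2 * ε lam / Rt ≤ 1/2 := by
      rw [div_le_iff₀ hRt0]
      calc 4 * T ^ 2 * ε lam ≤ Rt / 2 := hgood
      _ = 1/2 * Rt := by ring
    have hβhalf : 1/2 ≤ β := by
      rw [hβ]; linarith
    have hβpos : 0 < β := lt_of_lt_of_le (by norm_num) hβhalf
    have hβle1 : β ≤ 1 := by
      rw [hβ]
      have : 0 ≤ 4 * T ^ 2 * ε lam / Rt :=
        div_nonneg (mul_nonneg (by positivity) (hεnn lam)) hRt0.le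
      linarith
    set r' : ℝ := (Rt - 4 * T ^ 2 * ε lam) / Real.sqrt lam with hr'
    have hr'pos : 0 < r' := by
      apply div_pos _ hsl0
      linarith
    have hr'r : r' ≤ r := by
      rw [hr', hr]
      rw [div_le_div_iff_of_pos_right hsl0]
      have h0 : 0 ≤ 4 * T ^ 2 * ε lam := mul_nonneg (by positivity) (hεnn lam)
      linarith
    have hsub : r - r' = 4 * T ^ 2 * ε lam / Real.sqrt lam := by
      rw [hr, hr', ← sub_div]
      ring_nf
    have hβeq : r' / r = β := by
      rw [hr', hr, hβ]
      field_simp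
    -- geometry of ξ
    have hξpos : 0 < ‖ξ‖ := lt_of_lt_of_le (by linarith) hxi
    have hξne : ξ ≠ 0 := norm_pos_iff.mp hξpos
    have hξle : ‖ξ‖ ≤ Real.sqrt 2 * lam := by
      have h1 : ‖ξ‖ ^ 2 ≤ 2 * lam ^ 2 := by nlinarith [hVnn x]
      calc ‖ξ‖ = Real.sqrt (‖ξ‖ ^ 2) := (Real.sqrt_sq (norm_nonneg ξ)).symm
      _ ≤ Real.sqrt (2 * lam ^ 2) := Real.sqrt_le_sqrt h1
      _ = Real.sqrt 2 * lam := by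
          rw [Real.sqrt_mul (by norm_num : (0:ℝ) ≤ 2), Real.sqrt_sq hlam0.le]
    set σ : ℝ := ‖ξ‖ / lam with hσ
    have hσpos : 0 < σ := div_pos hξpos hlam0
    have hσhalf : 1 / 2 ≤ σ := by
      rw [hσ, le_div_iff₀ hlam0]
      linarith
    have hσle : σ ≤ Real.sqrt 2 := by
      rw [hσ, div_le_iff₀ hlam0]
      exact hξle
    set ν : EuclideanSpace ℝ (Fin d) := ‖ξ‖⁻¹ • ξ with hν
    have hνnorm : ‖ν‖ = 1 := norm_smul_inv_norm hξne
    have hline : ∀ t : ℝ, x + (t / lam) • ξ = x + (t * σ) • ν := by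
      intro t
      congr 1
      rw [hν, smul_smul]
      congr 1
      rw [hσ]
      field_simp
    set g : ℝ → ℝ := fun s => convK b r' (x + s • ν) with hg
    have hgcont : Continuous g :=
      (convK_continuous hbmeas hbd hr'pos).comp
        (continuous_const.add (continuous_id.smul continuous_const))
    have hΦdiff : Differentiable ℝ fun s : ℝ => Φ s ρ := fun s => (hΦ ρ s).differentiableAt
    have hΦcont : Continuous fun s : ℝ => Φ s ρ := hΦdiff.continuous
    have hIcont : Continuous fun t : ℝ => convK b r ((Φ (t / lam) ρ).1) :=
      (convK_continuous hbmeas hbd hrpos).comp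
        ((continuous_fst.comp hΦcont).comp (continuous_id.div_const lam))
    have hI2cont : Continuous fun t : ℝ => convK b r' (x + (t / lam) • ξ) :=
      (convK_continuous hbmeas hbd hr'pos).comp
        (continuous_const.add ((continuous_id.div_const lam).smul continuous_const))
    set I₁ : ℝ := ∫ t in (-(2 * T))..(2 * T), convK b r ((Φ (t / lam) ρ).1) with hI₁
    set I₂ : ℝ := ∫ t in (-(2 * T))..(2 * T), convK b r' (x + (t / lam) • ξ) with hI₂
    have step1 : β ^ d * I₂ ≤ I₁ := by
      rw [hI₂, ← intervalIntegral.integral_const_mul, hI₁]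
      apply intervalIntegral.integral_mono_on (by linarith)
      · exact (continuous_const.mul hI2cont).intervalIntegrable _ _
      · exact hIcont.intervalIntegrable _ _
      · intro t ht
        have habs : |t| ≤ 2 * T := abs_le.2 ⟨by linarith [ht.1], ht.2⟩
        have hdist : ‖(Φ (t / lam) ρ).1 - (x + (t / lam) • ξ)‖ ≤ r - r' := by
          rw [hsub]
          exact herr t habs
        have := convK_mono_center hbmeas hbnn hbd hr'pos hr'r hdist
        rwa [hβeq] at this
    set Jbig : ℝ := ∫ s in (-(2 * T) * σ)..(2 * T * σ), g s with hJbig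
    set J : ℝ := ∫ s in (-T)..T, g s with hJ
    have step2 : I₂ = σ⁻¹ * Jbig := by
      rw [hI₂]
      have hcongr : ∀ t : ℝ, convK b r' (x + (t / lam) • ξ) = g (t * σ) := by
        intro t
        rw [hg, hline t]
      rw [intervalIntegral.integral_congr (fun t _ => hcongr t)]
      rw [intervalIntegral.integral_comp_mul_right g hσpos.ne']
      rw [smul_eq_mul, hJbig]
    have step3 : J ≤ Jbig := by
      rw [hJ, hJbig]
      apply intervalIntegral.integral_mono_interval
        (show -(2 * T) * σ ≤ -T by nlinarith)
        (by linarith)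
        (show T ≤ 2 * T * σ by nlinarith)
      · exact Eventually.of_forall fun s => convK_nonneg hbnn r' _
      · exact hgcont.intervalIntegrable _ _
    have step4 : 2 * T * c ≤ J := by
      have hJ0 := hGCC x ν hνnorm r' hr'pos
      have h2T : (0:ℝ) < 2 * T := by linarith
      calc 2 * T * c ≤ 2 * T * ((2 * T)⁻¹ * ∫ t in (-T)..T, convK b r' (x + t • ν)) :=
            mul_le_mul_of_nonneg_left hJ0 h2T.le
      _ = ∫ t in (-T)..T, convK b r' (x + t • ν) := by field_simp
      _ = J := by rw [hJ]
    have hchain : β ^ d * ((Real.sqrt 2)⁻¹ * (2 * T * c)) ≤ I₁ := by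
      have h2Tc : (0:ℝ) ≤ 2 * T * c := by positivity
      have hinv : (Real.sqrt 2)⁻¹ ≤ σ⁻¹ := inv_anti₀ hσpos hσle
      have h1 : (Real.sqrt 2)⁻¹ * (2 * T * c) ≤ σ⁻¹ * (2 * T * c) :=
        mul_le_mul_of_nonneg_right hinv h2Tc
      have h2 : σ⁻¹ * (2 * T * c) ≤ σ⁻¹ * J :=
        mul_le_mul_of_nonneg_left step4 (inv_nonneg.2 hσpos.le)
      have h3 : σ⁻¹ * J ≤ σ⁻¹ * Jbig :=
        mul_le_mul_of_nonneg_left step3 (inv_nonneg.2 hσpos.le)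
      have h4 : (Real.sqrt 2)⁻¹ * (2 * T * c) ≤ I₂ := by
        rw [step2]; linarith
      calc β ^ d * ((Real.sqrt 2)⁻¹ * (2 * T * c)) ≤ β ^ d * I₂ :=
            mul_le_mul_of_nonneg_left h4 (by positivity)
      _ ≤ I₁ := step1
    have hfinal : A * β ^ d ≤ (2 * (2 * T))⁻¹ * I₁ := by
      have hAeq : A * β ^ d = (2 * (2 * T))⁻¹ * (β ^ d * ((Real.sqrt 2)⁻¹ * (2 * T * c))) := by
        rw [hA]
        field_simp
      rw [hAeq]
      exact mul_le_mul_of_nonneg_left hchain (by positivity)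
    have hgoal : A + A * (β ^ d - 1) = A * β ^ d := by ring
    rw [hgoal]
    exact hfinal
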